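/- arXiv:1804.10171 — 2 statements merged into one kernel-verified Lean document; each statement's English description precedes it below -/
import Mathlib

section
/- Let (X, ‖·‖) be a Banach space, T : X → X a C¹ map, x̄ ∈ X, Y ≥ 0 a constant, and Z : [0,∞) → [0,∞) a nonnegative, increasing, continuous function with ‖T(x̄) − x̄‖ ≤ Y and ‖DT(x)‖ ≤ Z(‖x − x̄‖) for all x ∈ X. If there exists r̄ > 0 such that Y + ∫₀^r̄ Z(s) ds < r̄ (without requiring Z(r̄) < 1), then there exists r̃ ∈ (0, r̄] such that T has a unique fixed point in the closed ball B(x̄, r̃). -/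
/-!
On a closed ball of radius `r` around `x̄` with `Y + ∫₀^r Z ≤ r` and `Z r < 1`, the integral mean
value inequality `‖T x - T x̄‖ ≤ ∫₀^{‖x - x̄‖} Z` makes `T` map the ball into itself, and
`‖DT‖ ≤ Z r < 1` makes it a contraction there, so the Banach fixed point theorem applies.
If `Z r̄ ≥ 1`, such an `r` lies just below the first point `r₀` where `Z` reaches `1`: past `r₀`
the integrand is at least `1`, so still `Y + ∫₀^{r₀} Z < r₀`, and as the primitive of `Z` is
monotone, any `r < r₀` above `Y + ∫₀^{r₀} Z` will do.
-/

open Set intervalIntegral Metric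

open scoped NNReal

theorem LipschitzOnWith.existsUnique_fixedPoint {α : Type*} [MetricSpace α] {f : α → α}
    {s : Set α} {K : ℝ≥0} (hf : LipschitzOnWith K f s) (hK : K < 1) (hsf : MapsTo f s s)
    (hsc : IsComplete s) (hs : s.Nonempty) :
    ∃! x, x ∈ s ∧ f x = x := by
  obtain ⟨x₀, hx₀⟩ := hs
  obtain ⟨x, hxs, hfx, -⟩ :=
    ContractingWith.exists_fixedPoint' hsc hsf ⟨hK, hf.mapsToRestrict hsf⟩ hx₀ (edist_ne_top _ _)
  refine ⟨x, ⟨hxs, hfx⟩, fun y ⟨hys, hfy⟩ => dist_le_zero.1 ?_⟩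
  have h : dist y x ≤ K * dist y x := by
    simpa only [hfy, hfx.eq] using hf.dist_le_mul y hys x hxs
  have hK' : (K : ℝ) < 1 := hK
  nlinarith [dist_nonneg (x := y) (y := x)]

section Primitive

variable {Z : ℝ → ℝ}

theorem intervalIntegrable_of_continuousOn_Ici (hZ : ContinuousOn Z (Ici 0)) {a b : ℝ}
    (ha : 0 ≤ a) (hb : 0 ≤ b) : IntervalIntegrable Z MeasureTheory.volume a b :=
  (hZ.mono fun _ ht => (le_min ha hb).trans ht.1).intervalIntegrable

theorem monotoneOn_integral_of_nonneg (hZ0 : ∀ s, 0 ≤ s → 0 ≤ Z s)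
    (hZ : ContinuousOn Z (Ici 0)) : MonotoneOn (fun r => ∫ s in 0..r, Z s) (Ici 0) :=
  fun _ ha _ hb hab => integral_mono_interval le_rfl ha hab
    (MeasureTheory.ae_restrict_of_forall_mem measurableSet_Ioc fun s hs => hZ0 s hs.1.le)
    (intervalIntegrable_of_continuousOn_Ici hZ le_rfl hb)

theorem exists_radius_of_integral_lt (hZ0 : ∀ s, 0 ≤ s → 0 ≤ Z s) (hZmono : MonotoneOn Z (Ici 0))
    (hZ : ContinuousOn Z (Ici 0)) {Y rbar : ℝ} (hY : 0 ≤ Y) (hrbar : 0 < rbar)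
    (h : Y + ∫ s in 0..rbar, Z s < rbar) :
    ∃ r, 0 < r ∧ r ≤ rbar ∧ Z r < 1 ∧ Y + ∫ s in 0..r, Z s ≤ r := by
  by_cases hZrbar : Z rbar < 1
  · exact ⟨rbar, hrbar, le_rfl, hZrbar, h.le⟩
  set S := Icc 0 rbar ∩ Z ⁻¹' Ici 1
  have hSc : IsClosed S :=
    (hZ.mono fun _ ht => ht.1).preimage_isClosed_of_isClosed isClosed_Icc isClosed_Ici
  have hSb : BddBelow S := ⟨0, fun _ hr => hr.1.1⟩
  obtain ⟨⟨hr₀, hr₀rbar⟩, hZr₀⟩ := hSc.csInf_mem ⟨rbar, ⟨hrbar.le, le_rfl⟩, not_lt.1 hZrbar⟩ hSb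
  set r₀ := sInf S
  have hZ_lt : ∀ r, 0 ≤ r → r < r₀ → Z r < 1 := fun r hr hrr₀ =>
    not_le.1 fun h1 => notMem_of_lt_csInf hrr₀ hSb ⟨⟨hr, hrr₀.le.trans hr₀rbar⟩, h1⟩
  have htail : rbar - r₀ ≤ ∫ s in r₀..rbar, Z s := by
    simpa using integral_mono_on hr₀rbar intervalIntegrable_const
      (intervalIntegrable_of_continuousOn_Ici hZ hr₀ hrbar.le)
      fun s hs => hZr₀.trans (hZmono hr₀ (hr₀.trans hs.1) hs.1)
  have hr₀_lt : Y + ∫ s in 0..r₀, Z s < r₀ := by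
    have := integral_add_adjacent_intervals (intervalIntegrable_of_continuousOn_Ici hZ le_rfl hr₀)
      (intervalIntegrable_of_continuousOn_Ici hZ hr₀ hrbar.le)
    linarith
  have hr₀pos : 0 < r₀ := hr₀.lt_of_ne fun h0 => by
    rw [← h0, integral_same] at hr₀_lt
    linarith
  set r := max (Y + ∫ s in 0..r₀, Z s) (r₀ / 2)
  have hrr₀ : r < r₀ := max_lt hr₀_lt (half_lt_self hr₀pos)
  have hr : 0 < r := lt_max_of_lt_right (half_pos hr₀pos)
  refine ⟨r, hr, hrr₀.le.trans hr₀rbar, hZ_lt r hr.le hrr₀, ?_⟩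
  calc Y + ∫ s in 0..r, Z s ≤ Y + ∫ s in 0..r₀, Z s := by
        gcongr
        exact monotoneOn_integral_of_nonneg hZ0 hZ hr.le hr₀ hrr₀.le
    _ ≤ r := le_max_left _ _

end Primitive

theorem norm_sub_le_integral_of_norm_fderiv_le {E F : Type*} [NormedAddCommGroup E]
    [NormedSpace ℝ E] [NormedAddCommGroup F] [NormedSpace ℝ F] [CompleteSpace F] {f : E → F} (hf : ContDiff ℝ 1 f) {x₀ : E}
    {Z : ℝ → ℝ} (hZ : ContinuousOn Z (Ici 0)) (hZf : ∀ x, ‖fderiv ℝ f x‖ ≤ Z ‖x - x₀‖) (x : E) :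
    ‖f x - f x₀‖ ≤ ∫ s in 0..‖x - x₀‖, Z s := by
  rcases (norm_nonneg (x - x₀)).eq_or_lt with hd | hd
  · obtain rfl : x = x₀ := sub_eq_zero.1 (norm_eq_zero.1 hd.symm)
    simp
  set u := ‖x - x₀‖⁻¹ • (x - x₀)
  have hu : ‖u‖ = 1 := norm_smul_inv_norm (norm_pos_iff.1 hd)
  have hx : x₀ + ‖x - x₀‖ • u = x := by
    rw [smul_inv_smul₀ hd.ne', add_sub_cancel]
  have hderiv : ∀ t : ℝ, HasDerivAt (fun t : ℝ => f (x₀ + t • u)) (fderiv ℝ f (x₀ + t • u) u) t :=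
    fun t => ((hf.differentiable one_ne_zero _).hasFDerivAt).comp_hasDerivAt t
      (((hasDerivAt_id t).smul_const u).const_add x₀ |>.congr_deriv (one_smul ℝ u))
  have hcont : Continuous fun t : ℝ => fderiv ℝ f (x₀ + t • u) u :=
    ((hf.continuous_fderiv one_ne_zero).comp (by fun_prop)).clm_apply continuous_const
  have hbound : ∀ t, 0 ≤ t → ‖fderiv ℝ f (x₀ + t • u) u‖ ≤ Z t := fun t ht =>
    calc ‖fderiv ℝ f (x₀ + t • u) u‖ ≤ ‖fderiv ℝ f (x₀ + t • u)‖ := by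
          simpa [hu] using (fderiv ℝ f (x₀ + t • u)).le_opNorm u
      _ ≤ Z t := by
          simpa [norm_smul, hu, abs_of_nonneg ht] using hZf (x₀ + t • u)
  calc ‖f x - f x₀‖ = ‖∫ t in 0..‖x - x₀‖, fderiv ℝ f (x₀ + t • u) u‖ := by
        rw [integral_eq_sub_of_hasDerivAt (fun t _ => hderiv t) (hcont.intervalIntegrable _ _), hx,
          zero_smul, add_zero]
    _ ≤ ∫ s in 0..‖x - x₀‖, Z s :=
        norm_integral_le_of_norm_le hd.le (.of_forall fun t ht => hbound t ht.1.le)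
          (intervalIntegrable_of_continuousOn_Ici hZ le_rfl hd.le)

theorem mapsTo_closedBall_of_integral_le {E : Type*} [NormedAddCommGroup E] [NormedSpace ℝ E]
    [CompleteSpace E] {T : E → E} (hT : ContDiff ℝ 1 T) {x₀ : E} {Y r : ℝ} {Z : ℝ → ℝ}
    (hZ0 : ∀ s, 0 ≤ s → 0 ≤ Z s) (hZ : ContinuousOn Z (Ici 0)) (hY : ‖T x₀ - x₀‖ ≤ Y)
    (hZT : ∀ x, ‖fderiv ℝ T x‖ ≤ Z ‖x - x₀‖) (hr : Y + ∫ s in 0..r, Z s ≤ r) :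
    MapsTo T (closedBall x₀ r) (closedBall x₀ r) := by
  intro x hx
  rw [mem_closedBall_iff_norm] at hx ⊢
  have hint : ∫ s in 0..‖x - x₀‖, Z s ≤ ∫ s in 0..r, Z s :=
    monotoneOn_integral_of_nonneg hZ0 hZ (norm_nonneg _) ((norm_nonneg _).trans hx) hx
  calc ‖T x - x₀‖ = ‖(T x - T x₀) + (T x₀ - x₀)‖ := by rw [sub_add_sub_cancel]
    _ ≤ ‖T x - T x₀‖ + ‖T x₀ - x₀‖ := norm_add_le _ _
    _ ≤ (∫ s in 0..r, Z s) + Y :=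
        add_le_add ((norm_sub_le_integral_of_norm_fderiv_le hT hZ hZT x).trans hint) hY
    _ ≤ r := by linarith

theorem validation_fixed_point_without_Z_condition_general
    {X : Type*} [NormedAddCommGroup X] [NormedSpace ℝ X] [CompleteSpace X]
    (T : X → X) (hT : ContDiff ℝ 1 T) (xbar : X)
    (Y : ℝ) (Z : ℝ → ℝ)
    (hZmono : MonotoneOn Z (Set.Ici 0))
    (hZcont : ContinuousOn Z (Set.Ici 0))
    (hYb : ‖T xbar - xbar‖ ≤ Y)
    (hZb : ∀ x : X, ‖fderiv ℝ T x‖ ≤ Z ‖x - xbar‖)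
    (rbar : ℝ) (hrbar : 0 < rbar)
    (h1 : Y + ∫ s in (0:ℝ)..rbar, Z s < rbar) :
    ∃ rtilde : ℝ, 0 < rtilde ∧ rtilde ≤ rbar ∧
      ∃! x : X, x ∈ Metric.closedBall xbar rtilde ∧ T x = x := by
  have hY0 : 0 ≤ Y := (norm_nonneg _).trans hYb
  have hZ0 : ∀ s, 0 ≤ s → 0 ≤ Z s := fun s hs =>
    calc 0 ≤ ‖fderiv ℝ T xbar‖ := norm_nonneg _
      _ ≤ Z 0 := by simpa using hZb xbar
      _ ≤ Z s := hZmono self_mem_Ici hs hs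
  obtain ⟨r, hr, hrrbar, hZr, hYr⟩ := exists_radius_of_integral_lt hZ0 hZmono hZcont hY0 hrbar h1
  refine ⟨r, hr, hrrbar, ?_⟩
  have hlip : LipschitzOnWith ⟨Z r, hZ0 r hr.le⟩ T (closedBall xbar r) :=
    (convex_closedBall xbar r).lipschitzOnWith_of_nnnorm_fderiv_le
      (fun x _ => hT.differentiable one_ne_zero x) fun x hx =>
        NNReal.coe_le_coe.1 <| (hZb x).trans <|
          hZmono (norm_nonneg _) hr.le (mem_closedBall_iff_norm.1 hx)
  exact hlip.existsUnique_fixedPoint (NNReal.coe_lt_coe.1 hZr)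
    (mapsTo_closedBall_of_integral_le hT hZ0 hZcont hYb hZb hYr) isClosed_closedBall.isComplete
    ⟨xbar, mem_closedBall_self hr.le⟩

/-- Variant of the validation theorem (Remark 2.2 of the paper): the condition
`Y + ∫₀^r̄ Z < r̄` alone already implies the existence of some radius `r̃ ∈ (0, r̄]`
such that `T` has a unique fixed point in the closed ball of radius `r̃` around `x̄`. -/
theorem validation_fixed_point_without_Z_condition
    {X : Type*} [NormedAddCommGroup X] [NormedSpace ℝ X] [CompleteSpace X]
    (T : X → X) (hT : ContDiff ℝ 1 T) (xbar : X)
    (Y : ℝ) (hY0 : 0 ≤ Y) (Z : ℝ → ℝ)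
    (hZ0 : ∀ s, 0 ≤ s → 0 ≤ Z s)
    (hZmono : MonotoneOn Z (Set.Ici 0))
    (hZcont : ContinuousOn Z (Set.Ici 0))
    (hYb : ‖T xbar - xbar‖ ≤ Y)
    (hZb : ∀ x : X, ‖fderiv ℝ T x‖ ≤ Z ‖x - xbar‖)
    (rbar : ℝ) (hrbar : 0 < rbar)
    (h1 : Y + ∫ s in (0:ℝ)..rbar, Z s < rbar) :
    ∃ rtilde : ℝ, 0 < rtilde ∧ rtilde ≤ rbar ∧
      ∃! x : X, x ∈ Metric.closedBall xbar rtilde ∧ T x = x :=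
  validation_fixed_point_without_Z_condition_general T hT xbar Y Z hZmono hZcont hYb hZb rbar hrbar
    h1
end

section
/- Let X be a Banach space and T : X → X be C¹. Fix x̄ ∈ X, r* > 0, and nonnegative constants Y, Z₁, Z₂ such that ‖T(x̄) − x̄‖ ≤ Y, ‖DT(x̄)‖ ≤ Z₁, and ‖DT(x) − DT(x̄)‖ ≤ Z₂‖x − x̄‖ for all x in the closed ball B(x̄, r*). If there exists r̄ ∈ (0, r*] with (Z₂/2) r̄² − (1 − Z₁) r̄ + Y < 0 and Z₁ + Z₂ r̄ < 1, then T has a unique fixed point in B(x̄, r̄). -/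
/-!
The ball `B(x̄, r̄)` is invariant under `T`: a second-order Taylor estimate, obtained from the
Lipschitz bound on `DT` by comparing `t ↦ T(x̄ + t v) - T(x̄) - t DT(x̄) v` with
`t ↦ (Z₂/2) t² ‖v‖²`, gives `‖T x - x̄‖ ≤ (Z₂/2) r̄² + Z₁ r̄ + Y ≤ r̄`. On that ball
`‖DT‖ ≤ Z₁ + Z₂ r̄ < 1`, so `T` is a contraction there and the Banach fixed point theorem applies.
-/

open Metric Set Function
open scoped NNReal

theorem exists_unique_isFixedPt_of_lipschitzOnWith {α : Type*} [MetricSpace α] {f : α → α}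
    {s : Set α} {K : ℝ≥0} (hs : IsComplete s) (hne : s.Nonempty) (hfs : MapsTo f s s)
    (hf : LipschitzOnWith K f s) (hK : K < 1) : ∃! x, x ∈ s ∧ IsFixedPt f x := by
  have hcontr : ContractingWith K (hfs.restrict f s s) := ⟨hK, hf.mapsToRestrict hfs⟩
  obtain ⟨x₀, hx₀⟩ := hne
  obtain ⟨x, hxs, hx, -⟩ := hcontr.exists_fixedPoint' hs hfs hx₀ (edist_ne_top _ _)
  refine ⟨x, ⟨hxs, hx⟩, fun y ⟨hys, hy⟩ => ?_⟩
  have hy' : IsFixedPt (hfs.restrict f s s) ⟨y, hys⟩ := Subtype.ext hy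
  have hx' : IsFixedPt (hfs.restrict f s s) ⟨x, hxs⟩ := Subtype.ext hx
  exact congrArg Subtype.val (hcontr.fixedPoint_unique' hy' hx')

section Derivative

variable {E F : Type*} [NormedAddCommGroup E] [NormedSpace ℝ E]
  [NormedAddCommGroup F] [NormedSpace ℝ F] {x₀ : E} {r Y Z₁ Z₂ : ℝ}

theorem StarConvex.norm_image_sub_sub_fderiv_le {f : E → F} {s : Set E} {L : ℝ} (hs : StarConvex ℝ x₀ s)
    (hf : ∀ y ∈ s, DifferentiableAt ℝ f y)
    (hL : ∀ y ∈ s, ‖fderiv ℝ f y - fderiv ℝ f x₀‖ ≤ L * ‖y - x₀‖) {x : E} (hx : x ∈ s) :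
    ‖f x - f x₀ - fderiv ℝ f x₀ (x - x₀)‖ ≤ L / 2 * ‖x - x₀‖ ^ 2 := by
  set v := x - x₀
  set A := fderiv ℝ f x₀
  have hseg : ∀ t ∈ Icc (0 : ℝ) 1, x₀ + t • v ∈ s := fun t ht => hs.add_smul_sub_mem hx ht.1 ht.2
  set g : ℝ → F := fun t => f (x₀ + t • v) - f x₀ - t • A v
  have hg : ∀ t ∈ Icc (0 : ℝ) 1, HasDerivAt g ((fderiv ℝ f (x₀ + t • v) - A) v) t := by
    intro t ht
    have hc : HasDerivAt (fun t : ℝ => x₀ + t • v) v t := by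
      simpa using ((hasDerivAt_id t).smul_const v).const_add x₀
    have hl : HasDerivAt (fun t : ℝ => t • A v) (A v) t := by
      simpa using (hasDerivAt_id t).smul_const (A v)
    rw [sub_apply]
    exact (((hf _ (hseg t ht)).hasFDerivAt.comp_hasDerivAt t hc).sub_const (f x₀)).sub hl
  have hB : ∀ t, HasDerivAt (fun t => L / 2 * ‖v‖ ^ 2 * t ^ 2) (L * ‖v‖ ^ 2 * t) t := by
    intro t
    exact ((hasDerivAt_pow 2 t).const_mul _).congr_deriv (by push_cast; ring)
  have hg' : ∀ t ∈ Ico (0 : ℝ) 1, ‖(fderiv ℝ f (x₀ + t • v) - A) v‖ ≤ L * ‖v‖ ^ 2 * t := by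
    intro t ht
    calc _ ≤ ‖fderiv ℝ f (x₀ + t • v) - A‖ * ‖v‖ := ContinuousLinearMap.le_opNorm _ _
      _ ≤ L * ‖x₀ + t • v - x₀‖ * ‖v‖ :=
        mul_le_mul_of_nonneg_right (hL _ (hseg t (Ico_subset_Icc_self ht))) (norm_nonneg v)
      _ = L * ‖v‖ ^ 2 * t := by
        rw [add_sub_cancel_left, norm_smul, Real.norm_of_nonneg ht.1]
        ring
  have hfence := image_norm_le_of_norm_deriv_right_le_deriv_boundary
    (fun t ht => (hg t ht).continuousAt.continuousWithinAt)
    (fun t ht => (hg t (Ico_subset_Icc_self ht)).hasDerivWithinAt) (by simp [g]) hB hg'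
    (right_mem_Icc.2 zero_le_one)
  have hv : x₀ + v = x := add_sub_cancel x₀ x
  simpa [g, hv] using hfence

theorem lipschitzOnWith_closedBall_of_norm_fderiv_sub_le {f : E → F}
    (hf : ∀ x ∈ closedBall x₀ r, DifferentiableAt ℝ f x) (hZ₁ : ‖fderiv ℝ f x₀‖ ≤ Z₁)
    (hZ₂ : 0 ≤ Z₂)
    (hL : ∀ x ∈ closedBall x₀ r, ‖fderiv ℝ f x - fderiv ℝ f x₀‖ ≤ Z₂ * ‖x - x₀‖) :
    LipschitzOnWith (Z₁ + Z₂ * r).toNNReal f (closedBall x₀ r) := by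
  refine (convex_closedBall x₀ r).lipschitzOnWith_of_nnnorm_fderiv_le hf fun x hx => ?_
  have hx' : ‖x - x₀‖ ≤ r := mem_closedBall_iff_norm.1 hx
  rw [← NNReal.coe_le_coe, coe_nnnorm, Real.coe_toNNReal']
  refine le_max_of_le_left ?_
  calc ‖fderiv ℝ f x‖ ≤ ‖fderiv ℝ f x₀‖ + ‖fderiv ℝ f x - fderiv ℝ f x₀‖ := norm_le_insert' _ _
    _ ≤ Z₁ + Z₂ * r := add_le_add hZ₁ ((hL x hx).trans (mul_le_mul_of_nonneg_left hx' hZ₂))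

theorem mapsTo_closedBall_of_norm_fderiv_sub_le {f : E → E}
    (hf : ∀ x ∈ closedBall x₀ r, DifferentiableAt ℝ f x) (hY : ‖f x₀ - x₀‖ ≤ Y)
    (hZ₁ : ‖fderiv ℝ f x₀‖ ≤ Z₁) (hZ₂ : 0 ≤ Z₂)
    (hL : ∀ x ∈ closedBall x₀ r, ‖fderiv ℝ f x - fderiv ℝ f x₀‖ ≤ Z₂ * ‖x - x₀‖)
    (hr : Z₂ / 2 * r ^ 2 - (1 - Z₁) * r + Y ≤ 0) :
    MapsTo f (closedBall x₀ r) (closedBall x₀ r) := by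
  intro x hx
  have hx' : ‖x - x₀‖ ≤ r := mem_closedBall_iff_norm.1 hx
  have hx₀ : x₀ ∈ closedBall x₀ r := mem_closedBall_self ((norm_nonneg _).trans hx')
  have htaylor := ((convex_closedBall x₀ r).starConvex hx₀).norm_image_sub_sub_fderiv_le hf hL hx
  have hlin : ‖fderiv ℝ f x₀ (x - x₀)‖ ≤ Z₁ * r :=
    (ContinuousLinearMap.le_opNorm _ _).trans
      (mul_le_mul hZ₁ hx' (norm_nonneg _) ((norm_nonneg _).trans hZ₁))
  rw [mem_closedBall_iff_norm]
  calc ‖f x - x₀‖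
      = ‖(f x - f x₀ - fderiv ℝ f x₀ (x - x₀)) + fderiv ℝ f x₀ (x - x₀) + (f x₀ - x₀)‖ := by
        congr 1; abel
    _ ≤ Z₂ / 2 * ‖x - x₀‖ ^ 2 + Z₁ * r + Y := norm_add₃_le.trans (add_le_add_three htaylor hlin hY)
    _ ≤ Z₂ / 2 * r ^ 2 + Z₁ * r + Y := by gcongr
    _ ≤ r := by linarith

end Derivative

theorem quadratic_validation_fixed_point_general
    {X : Type*} [NormedAddCommGroup X] [NormedSpace ℝ X] [CompleteSpace X]
    (T : X → X) (hT : ContDiff ℝ 1 T) (xbar : X)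
    (rstar : ℝ)
    (Y Z₁ Z₂ : ℝ) (hZ20 : 0 ≤ Z₂)
    (hY : ‖T xbar - xbar‖ ≤ Y)
    (hZ1 : ‖fderiv ℝ T xbar‖ ≤ Z₁)
    (hZ2 : ∀ x ∈ Metric.closedBall xbar rstar,
      ‖fderiv ℝ T x - fderiv ℝ T xbar‖ ≤ Z₂ * ‖x - xbar‖)
    (rbar : ℝ) (hrbar0 : 0 < rbar) (hrbar : rbar ≤ rstar)
    (hP : Z₂ / 2 * rbar ^ 2 - (1 - Z₁) * rbar + Y < 0)
    (hQ : Z₁ + Z₂ * rbar < 1) :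
    ∃! x : X, x ∈ Metric.closedBall xbar rbar ∧ T x = x := by
  have hdiff : ∀ x ∈ closedBall xbar rbar, DifferentiableAt ℝ T x :=
    fun x _ => hT.differentiable one_ne_zero x
  have hL : ∀ x ∈ closedBall xbar rbar, ‖fderiv ℝ T x - fderiv ℝ T xbar‖ ≤ Z₂ * ‖x - xbar‖ :=
    fun x hx => hZ2 x (closedBall_subset_closedBall hrbar hx)
  exact exists_unique_isFixedPt_of_lipschitzOnWith isClosed_closedBall.isComplete
    (nonempty_closedBall.2 hrbar0.le)
    (mapsTo_closedBall_of_norm_fderiv_sub_le hdiff hY hZ1 hZ20 hL hP.le)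
    (lipschitzOnWith_closedBall_of_norm_fderiv_sub_le hdiff hZ1 hZ20 hL)
    (Real.toNNReal_lt_one.2 hQ)

/-- The quadratic (Newton–Kantorovich type) validation theorem used in Section 3.1 of
the paper: with `Z(r) = Z₁ + Z₂ r`, if `(Z₂/2) r̄² − (1 − Z₁) r̄ + Y < 0` and
`Z₁ + Z₂ r̄ < 1` for some `r̄ ∈ (0, r*]`, then `T` has a unique fixed point in the
closed ball of radius `r̄` around `x̄`. -/
theorem quadratic_validation_fixed_point
    {X : Type*} [NormedAddCommGroup X] [NormedSpace ℝ X] [CompleteSpace X]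
    (T : X → X) (hT : ContDiff ℝ 1 T) (xbar : X)
    (rstar : ℝ) (hrstar : 0 < rstar)
    (Y Z₁ Z₂ : ℝ) (hY0 : 0 ≤ Y) (hZ10 : 0 ≤ Z₁) (hZ20 : 0 ≤ Z₂)
    (hY : ‖T xbar - xbar‖ ≤ Y)
    (hZ1 : ‖fderiv ℝ T xbar‖ ≤ Z₁)
    (hZ2 : ∀ x ∈ Metric.closedBall xbar rstar,
      ‖fderiv ℝ T x - fderiv ℝ T xbar‖ ≤ Z₂ * ‖x - xbar‖)
    (rbar : ℝ) (hrbar0 : 0 < rbar) (hrbar : rbar ≤ rstar)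
    (hP : Z₂ / 2 * rbar ^ 2 - (1 - Z₁) * rbar + Y < 0)
    (hQ : Z₁ + Z₂ * rbar < 1) :
    ∃! x : X, x ∈ Metric.closedBall xbar rbar ∧ T x = x :=
  quadratic_validation_fixed_point_general T hT xbar rstar Y Z₁ Z₂ hZ20 hY hZ1 hZ2 rbar hrbar0 hrbar
    hP hQ
end
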